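/- Let (X, ℬ, μ, T) be a measure-preserving system and f ∈ L^∞(μ) with f ≥ 0 and ∫ f dμ > 0. Let ρ be the positive finite measure on [0,1) (from the spectral theorem) with ∫ f · T^n f dμ = ∫₀¹ e(nθ) dρ(θ) for all n ≥ 0. Then ρ({0}) = ∫ E(f | ℐ)² dμ > 0, where ℐ is the σ-algebra of T-invariant sets. -/

import Mathlib

open MeasureTheory

/-- The standard complex exponential `e(x) = exp(2πix)`. -/
noncomputable def e (x : ℝ) : ℂ := Complex.exp (2 * (Real.pi : ℂ) * Complex.I * (x : ℂ))

/-- The σ-algebra of `T`-invariant measurable sets. -/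
def invSigma {X : Type*} [MeasurableSpace X] (T : X → X) : MeasurableSpace X where
  MeasurableSet' s := MeasurableSet s ∧ T ⁻¹' s = s
  measurableSet_empty := ⟨MeasurableSet.empty, by simp⟩
  measurableSet_compl s hs := ⟨hs.1.compl, by rw [Set.preimage_compl, hs.2]⟩
  measurableSet_iUnion f hf := ⟨MeasurableSet.iUnion fun i => (hf i).1, by
    rw [Set.preimage_iUnion]; exact Set.iUnion_congr fun i => (hf i).2⟩

/-!
Average both sides of the spectral identity over `n < N`. On the spectral side the Cesàro
means of `e(nθ)` are bounded by `1` and converge to the indicator of `θ = 0` on `[0, 1)`, so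
by dominated convergence the averages tend to `ρ {0}`. On the dynamical side the averages are
`⟪f, A_N f⟫`, where `A_N` are the Birkhoff averages of the Koopman operator on `L²`; by von
Neumann's mean ergodic theorem `A_N f` converges to the projection of `f` onto the fixed
vectors. These are exactly the `ℐ`-measurable functions, so the projection is `E(f | ℐ)` and
the limit is `⟪f, E(f | ℐ)⟫ = ∫ E(f | ℐ)²`, which is positive because `∫ E(f | ℐ) = ∫ f > 0`.
-/

open Filter Finset MeasurableSpace
open scoped Topology

theorem e_eq_exp (x : ℝ) : e x = Complex.exp ((2 * Real.pi * x : ℝ) * Complex.I) := by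
  rw [e]; push_cast; ring_nf

theorem norm_e (x : ℝ) : ‖e x‖ = 1 := by
  rw [e_eq_exp, Complex.norm_exp_ofReal_mul_I]

@[fun_prop]
theorem continuous_e : Continuous e := by
  unfold e; fun_prop

theorem e_nat_mul (n : ℕ) (x : ℝ) : e (n * x) = e x ^ n := by
  rw [e, e, ← Complex.exp_nat_mul]; push_cast; ring_nf

theorem e_eq_one_iff {x : ℝ} : e x = 1 ↔ ∃ n : ℤ, (n : ℝ) = x := by
  have h2πI : 2 * (Real.pi : ℂ) * Complex.I ≠ 0 := by simp [Real.pi_ne_zero]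
  rw [e, Complex.exp_eq_one_iff]
  refine exists_congr fun n => ?_
  rw [mul_comm (n : ℂ), mul_right_inj' h2πI, eq_comm]
  exact_mod_cast Iff.rfl

theorem e_ne_one_of_mem_Ioo {x : ℝ} (hx : x ∈ Set.Ioo 0 1) : e x ≠ 1 := by
  intro h
  obtain ⟨n, rfl⟩ := e_eq_one_iff.1 h
  have h0 : 0 < n := by exact_mod_cast hx.1
  have h1 : n < 1 := by exact_mod_cast hx.2
  omega

theorem norm_cesaro_pow_le_one {z : ℂ} (hz : ‖z‖ ≤ 1) (N : ℕ) :
    ‖(N : ℂ)⁻¹ * ∑ n ∈ range N, z ^ n‖ ≤ 1 := by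
  rcases N.eq_zero_or_pos with rfl | hN
  · simp
  calc ‖(N : ℂ)⁻¹ * ∑ n ∈ range N, z ^ n‖ ≤ (N : ℝ)⁻¹ * ∑ n ∈ range N, ‖z‖ ^ n := by
        rw [norm_mul, norm_inv, Complex.norm_natCast]
        gcongr
        exact (norm_sum_le _ _).trans_eq (by simp [norm_pow])
    _ ≤ (N : ℝ)⁻¹ * N := by
        gcongr
        exact (sum_le_sum fun n _ => pow_le_one₀ (norm_nonneg z) hz).trans_eq (by simp)
    _ = 1 := inv_mul_cancel₀ (by positivity)

theorem tendsto_cesaro_pow_zero {z : ℂ} (hz : ‖z‖ ≤ 1) (hz1 : z ≠ 1) :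
    Tendsto (fun N : ℕ => (N : ℂ)⁻¹ * ∑ n ∈ range N, z ^ n) atTop (𝓝 0) := by
  refine squeeze_zero_norm (a := fun N : ℕ => (N : ℝ)⁻¹ * (2 / ‖z - 1‖)) (fun N => ?_) ?_
  · rw [geom_sum_eq hz1, norm_mul, norm_inv, Complex.norm_natCast, norm_div]
    gcongr
    calc ‖z ^ N - 1‖ ≤ ‖z‖ ^ N + ‖(1 : ℂ)‖ := (norm_sub_le _ _).trans_eq (by rw [norm_pow])
      _ ≤ 2 := by rw [norm_one]; linarith [pow_le_one₀ (norm_nonneg z) hz (n := N)]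
  · simpa using tendsto_inv_atTop_nhds_zero_nat.mul_const (2 / ‖z - 1‖)

theorem tendsto_cesaro_e {θ : ℝ} (hθ : θ ∈ Set.Ico 0 1) :
    Tendsto (fun N : ℕ => (N : ℂ)⁻¹ * ∑ n ∈ range N, e (n * θ)) atTop
      (𝓝 (({0} : Set ℝ).indicator 1 θ)) := by
  simp only [e_nat_mul]
  rcases eq_or_ne θ 0 with rfl | hθ0
  · refine tendsto_const_nhds.congr' ?_
    filter_upwards [eventually_ne_atTop 0] with N hN
    simp [e, hN]
  · rw [Set.indicator_of_notMem (Set.mem_singleton_iff.not.2 hθ0)]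
    exact tendsto_cesaro_pow_zero (norm_e θ).le
      (e_ne_one_of_mem_Ioo ⟨hθ.1.lt_of_ne' hθ0, hθ.2⟩)

theorem tendsto_cesaro_integral_e {ρ : Measure ℝ} [IsFiniteMeasure ρ]
    (hρ : ρ (Set.Ico 0 1)ᶜ = 0) :
    Tendsto (fun N : ℕ => (N : ℂ)⁻¹ * ∑ n ∈ range N, ∫ θ, e (n * θ) ∂ρ) atTop
      (𝓝 (ρ.real {0} : ℂ)) := by
  have hint (n : ℕ) : Integrable (fun θ => e (n * θ)) ρ :=
    .of_bound (by fun_prop) 1 (ae_of_all _ fun θ => (norm_e _).le)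
  have hatom : ∫ θ, ({0} : Set ℝ).indicator 1 θ ∂ρ = (ρ.real {0} : ℂ) := by
    rw [Pi.one_def, integral_indicator_const _ (measurableSet_singleton 0), Complex.real_smul,
      mul_one]
  simp_rw [← hatom, ← integral_finsetSum _ fun n _ => hint n, ← integral_const_mul]
  refine tendsto_integral_of_dominated_convergence (fun _ => 1) (fun N => ?_) (integrable_const 1)
    (fun N => ae_of_all _ fun θ => ?_) ?_
  · exact Continuous.aestronglyMeasurable (by fun_prop)
  · simpa only [e_nat_mul] using norm_cesaro_pow_le_one (norm_e θ).le N
  · filter_upwards [mem_ae_iff.2 hρ] with θ hθ using tendsto_cesaro_e hθ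

theorem integral_condExp_sq_pos {X : Type*} {m m0 : MeasurableSpace X} {μ : Measure[m0] X}
    [IsFiniteMeasure μ] (hm : m ≤ m0) {f : X → ℝ} (hf : MemLp f 2 μ) (hf0 : ∫ x, f x ∂μ ≠ 0) :
    0 < ∫ x, (μ[f | m]) x ^ 2 ∂μ := by
  refine (integral_nonneg fun x => sq_nonneg _).lt_of_ne fun h0 => hf0 ?_
  have hsq : (fun x => (μ[f | m]) x ^ 2) =ᵐ[μ] 0 :=
    (integral_eq_zero_iff_of_nonneg (fun x => sq_nonneg _)
      (hf.condExp one_le_two).integrable_sq).1 h0.symm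
  rw [← integral_condExp hm,
    integral_congr_ae (hsq.mono fun x hx => (pow_eq_zero_iff two_ne_zero).1 hx), integral_zero]

section Koopman

variable {X : Type*} [MeasurableSpace X] {μ : Measure X} {T : X → X}

theorem invSigma_eq_invariants (T : X → X) : invSigma T = invariants T := rfl

theorem exists_measurable_invariants_ae_eq (hT : Measure.QuasiMeasurePreserving T μ μ)
    {h : X → ℝ} (hm : Measurable h) (hinv : h ∘ T =ᵐ[μ] h) :
    ∃ h' : X → ℝ, Measurable[invariants T] h' ∧ h' =ᵐ[μ] h := by
  have horbit : ∀ n, h ∘ T^[n] =ᵐ[μ] h := by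
    intro n
    induction n with
    | zero => rfl
    | succ n ih => exact (hT.ae_eq ih).trans hinv
  set h' : X → ℝ := fun x => liminf (fun n => h (T^[n] x)) atTop
  have h'_comp : h' ∘ T = h' := by
    funext x
    exact liminf_nat_add (fun n => h (T^[n] x)) 1
  refine ⟨h', measurable_invariants_dom.2
    ⟨.liminf fun n => hm.comp (hT.measurable.iterate n), fun s _ => by rw [h'_comp]⟩, ?_⟩
  filter_upwards [ae_all_iff.2 horbit] with x hx
  simp only [h', show ∀ n, h (T^[n] x) = h x from hx, liminf_const]

variable (μ) in
noncomputable def koopman (hT : MeasurePreserving T μ μ) : Lp ℝ 2 μ →L[ℝ] Lp ℝ 2 μ :=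
  (Lp.compMeasurePreservingₗᵢ ℝ T hT).toContinuousLinearMap

theorem eqLocus_koopman (hT : MeasurePreserving T μ μ) :
    (koopman μ hT).eqLocus (1 : Lp ℝ 2 μ →L[ℝ] Lp ℝ 2 μ) =
      lpMeas ℝ ℝ (invariants T) 2 μ := by
  ext w
  have hcomp : (koopman μ hT w : X → ℝ) =ᵐ[μ] w ∘ T := Lp.coeFn_compMeasurePreserving w hT
  simp only [LinearMap.mem_eqLocus, ContinuousLinearMap.coe_coe,
    mem_lpMeas_iff_aestronglyMeasurable]
  constructor
  · intro hw
    rw [hw] at hcomp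
    obtain ⟨h', hm', hae⟩ := exists_measurable_invariants_ae_eq hT.quasiMeasurePreserving
      (Lp.stronglyMeasurable w).measurable hcomp.symm
    exact ⟨h', hm'.stronglyMeasurable, hae.symm⟩
  · rintro ⟨h', hm', hae⟩
    refine Lp.ext (hcomp.trans ((hT.quasiMeasurePreserving.ae_eq hae).trans ?_))
    rw [comp_eq_of_measurable_invariants hm'.measurable]
    exact hae.symm

theorem starProjection_eqLocus_koopman [IsFiniteMeasure μ] (hT : MeasurePreserving T μ μ)
    (F : Lp ℝ 2 μ) :
    ((koopman μ hT).eqLocus (1 : Lp ℝ 2 μ →L[ℝ] Lp ℝ 2 μ)).starProjection F =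
      condExpL2 ℝ ℝ (invariants_le T) F := by
  have hmem : (condExpL2 ℝ ℝ (invariants_le T) F : Lp ℝ 2 μ) ∈
      (koopman μ hT).eqLocus (1 : Lp ℝ 2 μ →L[ℝ] Lp ℝ 2 μ) := by
    rw [eqLocus_koopman]
    exact (condExpL2 ℝ ℝ (invariants_le T) F).2
  refine Submodule.eq_starProjection_of_mem_of_inner_eq_zero hmem fun w hw => ?_
  rw [eqLocus_koopman, mem_lpMeas_iff_aestronglyMeasurable] at hw
  rw [inner_sub_left, inner_condExpL2_eq_inner_fun _ _ _ hw, sub_self]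

theorem inner_koopman_iterate (hT : MeasurePreserving T μ μ) {f : X → ℝ} (hf : MemLp f 2 μ)
    (n : ℕ) :
    inner ℝ (hf.toLp f) ((koopman μ hT)^[n] (hf.toLp f)) = ∫ x, f x * f (T^[n] x) ∂μ := by
  have hiter : ((koopman μ hT)^[n] (hf.toLp f) : X → ℝ) =ᵐ[μ] f ∘ T^[n] := by
    rw [show ⇑(koopman μ hT) = Lp.compMeasurePreserving T hT from rfl,
      Lp.compMeasurePreserving_iterate]
    exact (Lp.coeFn_compMeasurePreserving _ _).trans
      ((hT.iterate n).quasiMeasurePreserving.ae_eq hf.coeFn_toLp)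
  rw [L2.inner_def]
  refine integral_congr_ae ?_
  filter_upwards [hf.coeFn_toLp, hiter] with x hx hxn
  simp [hx, hxn, mul_comm]

theorem tendsto_cesaro_integral_mul_iterate [IsFiniteMeasure μ] (hT : MeasurePreserving T μ μ)
    {f : X → ℝ} (hf : MemLp f 2 μ) :
    Tendsto (fun N : ℕ => (N : ℝ)⁻¹ * ∑ n ∈ range N, ∫ x, f x * f (T^[n] x) ∂μ) atTop
      (𝓝 (∫ x, (μ[f | invariants T]) x ^ 2 ∂μ)) := by
  have hm := invariants_le T
  have hmean := (koopman μ hT).tendsto_birkhoffAverage_orthogonalProjection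
    (LinearIsometry.norm_toContinuousLinearMap_le _) (hf.toLp f)
  rw [← Submodule.starProjection_apply, starProjection_eqLocus_koopman] at hmean
  have hinner : inner ℝ (hf.toLp f) (condExpL2 ℝ ℝ hm (hf.toLp f) : Lp ℝ 2 μ) =
      ∫ x, (μ[f | invariants T]) x ^ 2 ∂μ := by
    rw [← inner_condExpL2_eq_inner_fun hm _ _ (aestronglyMeasurable_condExpL2 _ _), L2.inner_def]
    refine integral_congr_ae ?_
    filter_upwards [hf.condExpL2_ae_eq_condExp (𝕜 := ℝ) hm] with x hx
    simp [hx, sq]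
  rw [← hinner]
  refine (tendsto_const_nhds.inner hmean).congr fun N => ?_
  simp only [birkhoffAverage, birkhoffSum, real_inner_smul_right, inner_sum, id,
    inner_koopman_iterate]

end Koopman

theorem stmt16_general {X : Type*} [MeasurableSpace X] (μ : Measure X) [IsProbabilityMeasure μ]
    (T : X → X) (hT : MeasurePreserving T μ μ)
    (f : X → ℝ) (hf : MemLp f ⊤ μ) (hfpos : 0 < ∫ x, f x ∂μ)
    (ρ : Measure ℝ) [IsFiniteMeasure ρ] (hρsupp : ρ (Set.Ico (0 : ℝ) 1)ᶜ = 0)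
    (hρ : ∀ n : ℕ, ((∫ x, f x * f (T^[n] x) ∂μ : ℝ) : ℂ) = ∫ θ, e ((n : ℝ) * θ) ∂ρ) :
    ρ {0} = ENNReal.ofReal (∫ x, (μ[f | invSigma T]) x ^ 2 ∂μ) ∧ 0 < ρ {0} := by
  rw [invSigma_eq_invariants]
  have hf2 : MemLp f 2 μ := hf.mono_exponent le_top
  have hergodic := (Complex.continuous_ofReal.tendsto _).comp
    (tendsto_cesaro_integral_mul_iterate hT hf2)
  have hspectral : Tendsto (fun N : ℕ =>
      (((N : ℝ)⁻¹ * ∑ n ∈ range N, ∫ x, f x * f (T^[n] x) ∂μ : ℝ) : ℂ)) atTop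
      (𝓝 (ρ.real {0} : ℂ)) := by
    simpa only [Complex.ofReal_mul, Complex.ofReal_inv, Complex.ofReal_natCast,
      Complex.ofReal_sum, hρ] using tendsto_cesaro_integral_e hρsupp
  have hatom : ρ {0} = ENNReal.ofReal (∫ x, (μ[f | invariants T]) x ^ 2 ∂μ) := by
    rw [← ofReal_measureReal]
    congr 1
    exact_mod_cast (tendsto_nhds_unique hergodic hspectral).symm
  refine ⟨hatom, ?_⟩
  rw [hatom]
  exact ENNReal.ofReal_pos.2 (integral_condExp_sq_pos (invariants_le T) hf2 hfpos.ne')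

theorem stmt16 {X : Type*} [MeasurableSpace X] (μ : Measure X) [IsProbabilityMeasure μ]
    (T : X → X) (hT : MeasurePreserving T μ μ)
    (f : X → ℝ) (hf : MemLp f ⊤ μ) (hf0 : 0 ≤ f) (hfpos : 0 < ∫ x, f x ∂μ)
    (ρ : Measure ℝ) [IsFiniteMeasure ρ] (hρsupp : ρ (Set.Ico (0 : ℝ) 1)ᶜ = 0)
    (hρ : ∀ n : ℕ, ((∫ x, f x * f (T^[n] x) ∂μ : ℝ) : ℂ) = ∫ θ, e ((n : ℝ) * θ) ∂ρ) :
    ρ {0} = ENNReal.ofReal (∫ x, (μ[f | invSigma T]) x ^ 2 ∂μ) ∧ 0 < ρ {0} :=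
  stmt16_general μ T hT f hf hfpos ρ hρsupp hρ
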